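/- (Error Probability Bound) Let Λ ⊂ ℝ^n be a full-rank lattice, σ_s, σ_w > 0, ε ∈ (0,1), α = σ_s²/(σ_s²+σ_w²), σ_eff² = σ_s²σ_w²/(σ_s²+σ_w²). Assume the normalization σ_eff · err⁻¹_ε(Λ) = 1. For t ∈ ℝ^n let E(t) = Pr[(1−α)X_t + αW ∉ V(Λ)], where X_t ~ D_{Λ+t, σ_s} and W ~ N(0, σ_w² I_n) are independent. Then for every γ ≥ 1, the set {t : E(t) ≥ γε} has measure at most 1/γ under the Gaussian measure N(0, σ_s² I_n). -/

import Mathlib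

open MeasureTheory Real Filter Pointwise
open scoped ENNReal RealInnerProductSpace

noncomputable section

/-- The (continuous) Gaussian density with parameter `σ` on `ℝⁿ`:
`f_σ(x) = (2πσ²)^{-n/2} exp(-‖x‖²/(2σ²))`. -/
def gaussF (n : ℕ) (σ : ℝ) (x : EuclideanSpace ℝ (Fin n)) : ℝ :=
  (2 * π * σ ^ 2) ^ (-(n : ℝ) / 2) * Real.exp (-‖x‖ ^ 2 / (2 * σ ^ 2))

/-- The Gaussian mass `f_σ(S) = Σ_{y ∈ S} f_σ(y)` of a (countable) set `S ⊆ ℝⁿ`. -/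
def gaussMass (n : ℕ) (σ : ℝ) (S : Set (EuclideanSpace ℝ (Fin n))) : ℝ :=
  ∑' y : S, gaussF n σ y

/-- The Gaussian measure `N(0, σ² Iₙ)` on `ℝⁿ`, given by its density w.r.t. Lebesgue measure. -/
def gaussMeasure (n : ℕ) (σ : ℝ) : Measure (EuclideanSpace ℝ (Fin n)) :=
  volume.withDensity fun x => ENNReal.ofReal (gaussF n σ x)

/-- The coset `S + t` of a set `S ⊆ ℝⁿ`, i.e. `{x | x - t ∈ S}`. -/
def coset (n : ℕ) (S : Set (EuclideanSpace ℝ (Fin n))) (t : EuclideanSpace ℝ (Fin n)) :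
    Set (EuclideanSpace ℝ (Fin n)) := {x | x - t ∈ S}

/-- The Voronoi cell of `S`: `{x | ⟪x,y⟫ ≤ ‖y‖²/2 for all y ∈ S}`. -/
def voronoi (n : ℕ) (S : Set (EuclideanSpace ℝ (Fin n))) : Set (EuclideanSpace ℝ (Fin n)) :=
  {x | ∀ y ∈ S, ⟪x, y⟫ ≤ ‖y‖ ^ 2 / 2}

/-- The inverse error function `err⁻¹_ε(Λ)`: the least `s > 0` such that a standard Gaussian
leaves `s · V(Λ)` with probability at most `ε`. -/
def errInv (n : ℕ) (ε : ℝ) (S : Set (EuclideanSpace ℝ (Fin n))) : ℝ :=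
  sInf {s : ℝ | 0 < s ∧ gaussMeasure n 1 ((s • voronoi n S)ᶜ) ≤ ENNReal.ofReal ε}

/-- The Shannon entropy (in nats) of the discrete Gaussian `D_{S,σ}` supported on `S`,
which assigns mass `f_σ(y)/f_σ(S)` to each `y ∈ S`. -/
def dgEntropy (n : ℕ) (σ : ℝ) (S : Set (EuclideanSpace ℝ (Fin n))) : ℝ :=
  -∑' y : S, (gaussF n σ y / gaussMass n σ S) * Real.log (gaussF n σ y / gaussMass n σ S)

/-- The flatness factor `ε_Λ(σ) = sup_{x ∈ V(Λ)} |V(Λ)·f_σ(Λ+x) − 1|`. -/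
def flatness (n : ℕ) (L : Submodule ℤ (EuclideanSpace ℝ (Fin n))) (σ : ℝ) : ℝ :=
  ⨆ x : voronoi n (L : Set (EuclideanSpace ℝ (Fin n))),
    |ZLattice.covolume L volume *
        gaussMass n σ (coset n (L : Set (EuclideanSpace ℝ (Fin n))) x) - 1|

/-!
Drawing the dither `t ∼ N(0, σs²)` and then `X ∼ D_{Λ+t,σs}` produces `X ∼ N(0, σs²)`: the
discrete Gaussians on the cosets average back to the continuous one. So the mean of `E(t)` over
`t` is `Pr[(1-α)X + αW ∉ V(Λ)]` for independent `X ∼ N(0, σs²)`, `W ∼ N(0, σw²)`. Completing the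
square shows `(1-α)X + αW ∼ N(0, σeff²)`, and under the normalization `σeff · err⁻¹_ε(Λ) = 1` this
probability is `Pr[Z ∉ err⁻¹_ε(Λ) · V(Λ)] ≤ ε`. Markov's inequality concludes.
-/

section GaussianDensity

variable {n : ℕ} {σ : ℝ}

lemma gaussF_nonneg (n : ℕ) (σ : ℝ) (x : EuclideanSpace ℝ (Fin n)) : 0 ≤ gaussF n σ x := by
  unfold gaussF; positivity

lemma gaussMass_nonneg (n : ℕ) (σ : ℝ) (S : Set (EuclideanSpace ℝ (Fin n))) :
    0 ≤ gaussMass n σ S :=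
  tsum_nonneg fun _ => gaussF_nonneg n σ _

@[fun_prop]
lemma continuous_gaussF (n : ℕ) (σ : ℝ) : Continuous (gaussF n σ) := by
  unfold gaussF; fun_prop

@[fun_prop]
lemma measurable_gaussF (n : ℕ) (σ : ℝ) : Measurable (gaussF n σ) :=
  (continuous_gaussF n σ).measurable

lemma gaussF_eq_const_mul_exp (n : ℕ) (σ : ℝ) (x : EuclideanSpace ℝ (Fin n)) :
    gaussF n σ x = (2 * π * σ ^ 2) ^ (-(n : ℝ) / 2) * Real.exp (-(1 / (2 * σ ^ 2)) * ‖x‖ ^ 2) := by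
  unfold gaussF; ring_nf

lemma integral_gaussF (hσ : 0 < σ) : ∫ x, gaussF n σ x = 1 := by
  simp_rw [gaussF_eq_const_mul_exp n σ]
  rw [integral_const_mul, GaussianFourier.integral_rexp_neg_mul_sq_norm (by positivity),
    finrank_euclideanSpace_fin, show π / (1 / (2 * σ ^ 2)) = 2 * π * σ ^ 2 by field_simp,
    ← Real.rpow_add (by positivity), neg_div, neg_add_cancel, Real.rpow_zero]

lemma integrable_gaussF (hσ : 0 < σ) : Integrable (gaussF n σ) :=
  .of_integral_ne_zero (by rw [integral_gaussF hσ]; exact one_ne_zero)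

lemma lintegral_gaussF (hσ : 0 < σ) : ∫⁻ x, ENNReal.ofReal (gaussF n σ x) = 1 := by
  rw [← ofReal_integral_eq_lintegral_ofReal (integrable_gaussF hσ)
    (Eventually.of_forall (gaussF_nonneg n σ)), integral_gaussF hσ, ENNReal.ofReal_one]

instance sFinite_gaussMeasure : SFinite (gaussMeasure n σ) := by
  unfold gaussMeasure; infer_instance

lemma isProbabilityMeasure_gaussMeasure (hσ : 0 < σ) : IsProbabilityMeasure (gaussMeasure n σ) :=
  ⟨by rw [gaussMeasure, withDensity_apply _ MeasurableSet.univ, Measure.restrict_univ,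
    lintegral_gaussF hσ]⟩

lemma lintegral_gaussMeasure (f : EuclideanSpace ℝ (Fin n) → ℝ≥0∞) :
    ∫⁻ x, f x ∂gaussMeasure n σ = ∫⁻ x, ENNReal.ofReal (gaussF n σ x) * f x :=
  lintegral_withDensity_eq_lintegral_mul_non_measurable _ (measurable_gaussF n σ).ennreal_ofReal
    (Eventually.of_forall fun _ => ENNReal.ofReal_lt_top) f

lemma gaussMeasure_apply {A : Set (EuclideanSpace ℝ (Fin n))} (hA : MeasurableSet A) :
    gaussMeasure n σ A = ∫⁻ x, ENNReal.ofReal (gaussF n σ x) * A.indicator 1 x := by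
  rw [← lintegral_gaussMeasure, lintegral_indicator_one hA]

lemma setIntegral_gaussF (A : Set (EuclideanSpace ℝ (Fin n))) :
    ∫ x in A, gaussF n σ x = (gaussMeasure n σ A).toReal := by
  rw [integral_eq_lintegral_of_nonneg_ae (Eventually.of_forall (gaussF_nonneg n σ))
    (continuous_gaussF n σ).aestronglyMeasurable, gaussMeasure, withDensity_apply']

lemma gaussF_one_eq_pow_mul_gaussF_smul (hσ : 0 < σ) (y : EuclideanSpace ℝ (Fin n)) :
    gaussF n 1 y = σ ^ n * gaussF n σ (σ • y) := by
  have hpow : σ ^ n * (2 * π * σ ^ 2) ^ (-(n : ℝ) / 2) = (2 * π) ^ (-(n : ℝ) / 2) := by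
    rw [Real.mul_rpow (by positivity) (by positivity), ← Real.rpow_natCast σ 2,
      ← Real.rpow_mul hσ.le, mul_left_comm, ← Real.rpow_natCast σ n, ← Real.rpow_add hσ,
      show ((n : ℕ) : ℝ) + ((2 : ℕ) : ℝ) * (-(n : ℝ) / 2) = 0 by push_cast; ring, Real.rpow_zero,
      mul_one]
  unfold gaussF
  rw [norm_smul, mul_pow, Real.norm_eq_abs, sq_abs, ← mul_assoc, hpow]
  congr 2
  · ring
  · field_simp

lemma gaussMeasure_eq_map_smul (hσ : 0 < σ) :
    gaussMeasure n σ = (gaussMeasure n 1).map (σ • ·) := by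
  ext A hA
  set ρ := fun x => ENNReal.ofReal (gaussF n σ x) * A.indicator 1 x
  have hρ : Measurable ρ := (measurable_gaussF n σ).ennreal_ofReal.mul (measurable_one.indicator hA)
  have hpt : ∀ y, ENNReal.ofReal (gaussF n 1 y) * ((σ • ·) ⁻¹' A).indicator 1 y =
      ENNReal.ofReal (σ ^ n) * ρ (σ • y) := by
    intro y
    rw [gaussF_one_eq_pow_mul_gaussF_smul hσ, ENNReal.ofReal_mul (by positivity), mul_assoc]
    rfl
  have hvol : ENNReal.ofReal (σ ^ n) • volume.map (σ • ·) =
      (volume : Measure (EuclideanSpace ℝ (Fin n))) := by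
    rw [Measure.map_addHaar_smul volume hσ.ne', smul_smul, ← ENNReal.ofReal_mul (by positivity),
      finrank_euclideanSpace_fin, abs_of_pos (by positivity), mul_inv_cancel₀ (by positivity),
      ENNReal.ofReal_one, one_smul]
  rw [Measure.map_apply (measurable_const_smul σ) hA,
    gaussMeasure_apply (hA.preimage (measurable_const_smul σ)), gaussMeasure_apply hA]
  calc ∫⁻ x, ρ x
      = ∫⁻ x, ρ x ∂(ENNReal.ofReal (σ ^ n) • volume.map (σ • ·)) := by rw [hvol]
    _ = ENNReal.ofReal (σ ^ n) * ∫⁻ y, ρ (σ • y) := by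
      rw [lintegral_smul_measure, lintegral_map hρ (measurable_const_smul σ), smul_eq_mul]
    _ = _ := by
      rw [lintegral_congr hpt]
      exact (lintegral_const_mul _ (hρ.comp (measurable_const_smul σ))).symm

end GaussianDensity

section Convolution

variable {n : ℕ} {σs σw α σeff : ℝ}

/-- Completing the square: the quadratic form `‖y - α z‖² / σs² + ‖y + (1 - α) z‖² / σw²`
equals `‖y‖² / σeff² + ‖z‖² / (σs² + σw²)`. -/
lemma gaussF_sub_smul_mul_gaussF_add_smul (hσs : 0 < σs) (hσw : 0 < σw)
    (hα : α = σs ^ 2 / (σs ^ 2 + σw ^ 2))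
    (hσeff : σeff = √(σs ^ 2 * σw ^ 2 / (σs ^ 2 + σw ^ 2))) (y z : EuclideanSpace ℝ (Fin n)) :
    gaussF n σs (y - α • z) * gaussF n σw (y + (1 - α) • z) =
      gaussF n σeff y * gaussF n √(σs ^ 2 + σw ^ 2) z := by
  have hS : 0 < σs ^ 2 + σw ^ 2 := by positivity
  have hσeff_sq : σeff ^ 2 = σs ^ 2 * σw ^ 2 / (σs ^ 2 + σw ^ 2) := by
    rw [hσeff, Real.sq_sqrt (by positivity)]
  have hτ_sq : √(σs ^ 2 + σw ^ 2) ^ 2 = σs ^ 2 + σw ^ 2 := Real.sq_sqrt hS.le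
  have hsub : ‖y - α • z‖ ^ 2 = ‖y‖ ^ 2 - 2 * (α * ⟪y, z⟫) + α ^ 2 * ‖z‖ ^ 2 := by
    rw [norm_sub_sq_real, real_inner_smul_right, norm_smul, mul_pow, Real.norm_eq_abs, sq_abs]
  have hadd : ‖y + (1 - α) • z‖ ^ 2 =
      ‖y‖ ^ 2 + 2 * ((1 - α) * ⟪y, z⟫) + (1 - α) ^ 2 * ‖z‖ ^ 2 := by
    rw [norm_add_sq_real, real_inner_smul_right, norm_smul, mul_pow, Real.norm_eq_abs, sq_abs]
  unfold gaussF
  rw [mul_mul_mul_comm, mul_mul_mul_comm ((2 * π * σeff ^ 2) ^ _),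
    ← Real.mul_rpow (by positivity) (by positivity),
    ← Real.mul_rpow (by positivity) (by positivity),
    ← Real.exp_add, ← Real.exp_add, hsub, hadd, hσeff_sq, hτ_sq, hα]
  congr 2
  · field_simp
  · field_simp
    ring

lemma measurable_gaussMeasure_preimage_affine (σ : ℝ) {A : Set (EuclideanSpace ℝ (Fin n))}
    (hA : MeasurableSet A) :
    Measurable fun u => gaussMeasure n σ {w | (1 - α) • u + α • w ∈ A} :=
  measurable_measure_prodMk_left (hA.preimage
    (by fun_prop : Measurable fun p : EuclideanSpace ℝ (Fin n) × _ => (1 - α) • p.1 + α • p.2))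

lemma lintegral_gaussMeasure_preimage_affine (hσs : 0 < σs) (hσw : 0 < σw)
    (hα : α = σs ^ 2 / (σs ^ 2 + σw ^ 2))
    (hσeff : σeff = √(σs ^ 2 * σw ^ 2 / (σs ^ 2 + σw ^ 2)))
    {A : Set (EuclideanSpace ℝ (Fin n))} (hA : MeasurableSet A) :
    ∫⁻ u, gaussMeasure n σw {w | (1 - α) • u + α • w ∈ A} ∂gaussMeasure n σs =
      gaussMeasure n σeff A := by
  set ρ : ℝ → EuclideanSpace ℝ (Fin n) → ℝ≥0∞ := fun σ x => ENNReal.ofReal (gaussF n σ x)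
  have hρ (σ : ℝ) : Measurable (ρ σ) := (measurable_gaussF n σ).ennreal_ofReal
  set χ : EuclideanSpace ℝ (Fin n) → ℝ≥0∞ := A.indicator 1
  have hχ : Measurable χ := measurable_one.indicator hA
  have hfiber (u : EuclideanSpace ℝ (Fin n)) :
      gaussMeasure n σw {w | (1 - α) • u + α • w ∈ A} =
        ∫⁻ z, ρ σw (u + z) * χ (u + α • z) := by
    have hB : MeasurableSet {w | (1 - α) • u + α • w ∈ A} :=
      (by fun_prop : Measurable fun w : EuclideanSpace ℝ (Fin n) => (1 - α) • u + α • w) hA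
    rw [gaussMeasure_apply hB, ← lintegral_add_left_eq_self _ u]
    refine lintegral_congr fun z => ?_
    have hpt : (1 - α) • u + α • (u + z) = u + α • z := by
      rw [sub_smul, one_smul, smul_add]; abel
    change ρ σw (u + z) * χ ((1 - α) • u + α • (u + z)) = _
    rw [hpt]
  have hshear (z : EuclideanSpace ℝ (Fin n)) :
      ∫⁻ u, ρ σs u * (ρ σw (u + z) * χ (u + α • z)) =
        ρ √(σs ^ 2 + σw ^ 2) z * ∫⁻ y, ρ σeff y * χ y := by
    rw [← lintegral_sub_right_eq_self _ (α • z),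
      ← lintegral_const_mul _ (f := fun y => ρ σeff y * χ y) ((hρ _).mul hχ)]
    refine lintegral_congr fun y => ?_
    rw [sub_add_cancel, show y - α • z + z = y + (1 - α) • z by rw [sub_smul, one_smul]; abel,
      ← mul_assoc, ← ENNReal.ofReal_mul (gaussF_nonneg n σs _),
      gaussF_sub_smul_mul_gaussF_add_smul hσs hσw hα hσeff,
      ENNReal.ofReal_mul (gaussF_nonneg n _ _)]
    ring
  calc ∫⁻ u, gaussMeasure n σw {w | (1 - α) • u + α • w ∈ A} ∂gaussMeasure n σs
      = ∫⁻ u, ∫⁻ z, ρ σs u * (ρ σw (u + z) * χ (u + α • z)) := by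
        rw [lintegral_gaussMeasure]
        refine lintegral_congr fun u => ?_
        rw [hfiber, lintegral_const_mul _ (by fun_prop)]
    _ = ∫⁻ z, ∫⁻ u, ρ σs u * (ρ σw (u + z) * χ (u + α • z)) :=
        lintegral_lintegral_swap (by fun_prop)
    _ = ∫⁻ z, ρ √(σs ^ 2 + σw ^ 2) z * ∫⁻ y, ρ σeff y * χ y := lintegral_congr hshear
    _ = gaussMeasure n σeff A := by
      rw [lintegral_mul_const _ (hρ _), lintegral_gaussF (by positivity), one_mul,
        gaussMeasure_apply hA]

end Convolution

section Voronoi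

variable {n : ℕ} {S : Set (EuclideanSpace ℝ (Fin n))}

lemma isClosed_voronoi (S : Set (EuclideanSpace ℝ (Fin n))) : IsClosed (voronoi n S) := by
  rw [show voronoi n S = ⋂ y ∈ S, {x | ⟪x, y⟫ ≤ ‖y‖ ^ 2 / 2} by ext; simp [voronoi]]
  exact isClosed_biInter fun y _ => isClosed_le (by fun_prop) continuous_const

lemma smul_mem_voronoi {x : EuclideanSpace ℝ (Fin n)} (hx : x ∈ voronoi n S) {c : ℝ}
    (hc0 : 0 ≤ c) (hc1 : c ≤ 1) : c • x ∈ voronoi n S := fun y hy => by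
  rw [real_inner_smul_left]
  calc c * ⟪x, y⟫ ≤ c * (‖y‖ ^ 2 / 2) := mul_le_mul_of_nonneg_left (hx y hy) hc0
    _ ≤ ‖y‖ ^ 2 / 2 := mul_le_of_le_one_left (by positivity) hc1

lemma smul_voronoi_subset_smul_voronoi {a b : ℝ} (ha : 0 < a) (hab : a ≤ b) :
    a • voronoi n S ⊆ b • voronoi n S := by
  have hb : 0 < b := ha.trans_le hab
  rintro _ ⟨v, hv, rfl⟩
  refine ⟨(a / b) • v, smul_mem_voronoi hv (by positivity) (div_le_one_of_le₀ hab hb.le), ?_⟩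
  simp only [smul_smul, mul_div_cancel₀ _ hb.ne']

/-- The infimum defining `errInv` is attained: take admissible scales decreasing to it and use
continuity from above of the measure, `voronoi` being closed and star-shaped. -/
lemma gaussMeasure_compl_smul_errInv_le {ε : ℝ} (hpos : 0 < errInv n ε S) :
    gaussMeasure n 1 (errInv n ε S • voronoi n S)ᶜ ≤ ENNReal.ofReal ε := by
  set s := errInv n ε S
  set adm := {s : ℝ | 0 < s ∧ gaussMeasure n 1 (s • voronoi n S)ᶜ ≤ ENNReal.ofReal ε}
  -- `sInf ∅ = 0`, so `0 < s` forces the admissible set to be nonempty.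
  have hne : adm.Nonempty := by
    by_contra h
    rw [Set.not_nonempty_iff_eq_empty] at h
    exact hpos.ne' (by simp only [s, errInv, adm] at h ⊢; rw [h, Real.sInf_empty])
  have hbdd : BddBelow adm := ⟨0, fun s hs => hs.1.le⟩
  obtain ⟨u, hu_anti, hu_lim, hu_mem⟩ := exists_seq_tendsto_sInf hne hbdd
  have hs_le (k : ℕ) : s ≤ u k := csInf_le hbdd (hu_mem k)
  have hmono : Monotone fun k => (u k • voronoi n S)ᶜ := fun k l hkl =>
    Set.compl_subset_compl.2 (smul_voronoi_subset_smul_voronoi (hu_mem l).1 (hu_anti hkl))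
  have hunion : ⋃ k, (u k • voronoi n S)ᶜ = (s • voronoi n S)ᶜ := by
    refine (Set.iUnion_subset fun k => Set.compl_subset_compl.2
      (smul_voronoi_subset_smul_voronoi hpos (hs_le k))).antisymm fun x hx => ?_
    by_contra hcov
    simp only [Set.mem_iUnion, Set.mem_compl_iff, not_exists, not_not] at hcov
    refine hx ((Set.mem_smul_set_iff_inv_smul_mem₀ hpos.ne' _ x).2 ?_)
    exact (isClosed_voronoi S).mem_of_tendsto ((hu_lim.inv₀ hpos.ne').smul_const x)
      (Eventually.of_forall fun k =>
        (Set.mem_smul_set_iff_inv_smul_mem₀ (hu_mem k).1.ne' _ x).1 (hcov k))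
  have hlim := tendsto_measure_iUnion_atTop (μ := gaussMeasure n 1) hmono
  rw [hunion] at hlim
  exact le_of_tendsto hlim (Eventually.of_forall fun k => (hu_mem k).2)

lemma gaussMeasure_compl_voronoi_le {σ ε : ℝ} (hσ : 0 < σ) (hnorm : σ * errInv n ε S = 1) :
    gaussMeasure n σ (voronoi n S)ᶜ ≤ ENNReal.ofReal ε := by
  have hinv : errInv n ε S = σ⁻¹ := (eq_inv_of_mul_eq_one_right hnorm)
  have hpre : (σ • ·) ⁻¹' (voronoi n S)ᶜ = (errInv n ε S • voronoi n S)ᶜ := by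
    ext x
    rw [hinv, Set.mem_preimage, Set.mem_compl_iff, Set.mem_compl_iff,
      Set.mem_smul_set_iff_inv_smul_mem₀ (inv_ne_zero hσ.ne'), inv_inv]
  rw [gaussMeasure_eq_map_smul hσ,
    Measure.map_apply (measurable_const_smul σ) (isClosed_voronoi S).measurableSet.compl, hpre]
  exact gaussMeasure_compl_smul_errInv_le (hinv ▸ inv_pos.2 hσ)

end Voronoi

lemma tsum_ofReal_mul_ofReal_div_tsum_le {ι : Type*} {a : ι → ℝ} (ha : ∀ i, 0 ≤ a i) {b : ℝ}
    (hb : 0 ≤ b) :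
    (∑' i, ENNReal.ofReal (a i)) * ENNReal.ofReal (b / ∑' i, a i) ≤ ENNReal.ofReal b := by
  by_cases hs : Summable a
  · rw [← ENNReal.ofReal_tsum_of_nonneg ha hs, ← ENNReal.ofReal_mul (tsum_nonneg ha)]
    refine ENNReal.ofReal_le_ofReal ?_
    rcases (tsum_nonneg ha).eq_or_lt with h0 | hpos
    · rw [← h0, zero_mul]; exact hb
    · rw [mul_div_cancel₀ _ hpos.ne']
  · rw [tsum_eq_zero_of_not_summable hs, div_zero, ENNReal.ofReal_zero, mul_zero]
    exact zero_le

section Cosets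

variable {n : ℕ} (L : Submodule ℤ (EuclideanSpace ℝ (Fin n)))

lemma coset_sub_of_mem {c : EuclideanSpace ℝ (Fin n)} (hc : c ∈ L) (u : EuclideanSpace ℝ (Fin n)) :
    coset n L (u - c) = coset n L u := by
  ext x
  simp only [coset, Set.mem_ofPred_eq, SetLike.mem_coe, sub_sub_eq_add_sub, add_sub_right_comm]
  exact L.add_mem_iff_left hc

def equivCoset (t : EuclideanSpace ℝ (Fin n)) : L ≃ coset n L t where
  toFun c := ⟨t + c, by simp [coset]⟩
  invFun x := ⟨x - t, x.2⟩
  left_inv c := by ext; simp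
  right_inv x := by ext; simp

lemma gaussMass_coset (σ : ℝ) (t : EuclideanSpace ℝ (Fin n)) :
    gaussMass n σ (coset n L t) = ∑' c : L, gaussF n σ (t + c) :=
  ((equivCoset L t).tsum_eq fun x => gaussF n σ x).symm

lemma tsum_coset_mul_toReal (σ : ℝ) (t : EuclideanSpace ℝ (Fin n))
    (g : EuclideanSpace ℝ (Fin n) → ℝ≥0∞) (hg : ∀ x, g x ≠ ∞) :
    ∑' x : coset n L t, gaussF n σ x / gaussMass n σ (coset n L t) * (g x).toReal =
      (∑' c : L, ENNReal.ofReal (gaussF n σ (t + c) / gaussMass n σ (coset n L t)) *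
        g (t + c)).toReal := by
  rw [ENNReal.tsum_toReal_eq fun c => ENNReal.mul_ne_top ENNReal.ofReal_ne_top (hg _),
    ← (equivCoset L t).tsum_eq]
  refine tsum_congr fun c => ?_
  rw [ENNReal.toReal_mul, ENNReal.toReal_ofReal
    (div_nonneg (gaussF_nonneg n σ _) (gaussMass_nonneg n σ _))]
  rfl

@[fun_prop]
lemma measurable_gaussMass_coset [Countable L] (σ : ℝ) :
    Measurable fun t => gaussMass n σ (coset n L t) := by
  have h (t : EuclideanSpace ℝ (Fin n)) : gaussMass n σ (coset n L t) =
      (∑' c : L, ENNReal.ofReal (gaussF n σ (t + c))).toReal := by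
    rw [gaussMass_coset, ENNReal.tsum_toReal_eq fun _ => ENNReal.ofReal_ne_top]
    exact tsum_congr fun c => (ENNReal.toReal_ofReal (gaussF_nonneg n σ _)).symm
  simp_rw [h]
  exact (Measurable.tsum fun c => by fun_prop).ennreal_toReal

/-- Equality holds; proving only `≤` avoids showing that the coset sums converge. -/
lemma lintegral_tsum_coset_le [Countable L] (σ : ℝ) {h : EuclideanSpace ℝ (Fin n) → ℝ≥0∞}
    (hh : Measurable h) :
    ∫⁻ t, ∑' c : L, ENNReal.ofReal (gaussF n σ (t + c) / gaussMass n σ (coset n L t)) *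
        h (t + c) ∂gaussMeasure n σ ≤ ∫⁻ x, h x ∂gaussMeasure n σ := by
  set M := fun t => gaussMass n σ (coset n L t)
  set ρ := fun x => ENNReal.ofReal (gaussF n σ x)
  have hmass (u : EuclideanSpace ℝ (Fin n)) :
      (∑' c : L, ρ (u - c)) * ENNReal.ofReal (gaussF n σ u / M u) ≤ ρ u := by
    rw [← (Equiv.neg L).tsum_eq]
    simp only [Equiv.neg_apply, Submodule.coe_neg, sub_neg_eq_add, M, gaussMass_coset]
    exact tsum_ofReal_mul_ofReal_div_tsum_le (fun c => gaussF_nonneg n σ _) (gaussF_nonneg n σ u)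
  calc ∫⁻ t, ∑' c : L, ENNReal.ofReal (gaussF n σ (t + c) / M t) * h (t + c) ∂gaussMeasure n σ
      = ∫⁻ t, ∑' c : L, ρ t * (ENNReal.ofReal (gaussF n σ (t + c) / M t) * h (t + c)) := by
        simp_rw [lintegral_gaussMeasure, ENNReal.tsum_mul_left]
        rfl
    _ = ∑' c : L, ∫⁻ t, ρ t * (ENNReal.ofReal (gaussF n σ (t + c) / M t) * h (t + c)) :=
        lintegral_tsum fun c => by fun_prop
    _ = ∑' c : L, ∫⁻ u, ρ (u - c) * (ENNReal.ofReal (gaussF n σ u / M u) * h u) := by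
        refine tsum_congr fun c => ?_
        rw [← lintegral_sub_right_eq_self _ (c : EuclideanSpace ℝ (Fin n))]
        simp only [sub_add_cancel, M, coset_sub_of_mem L c.2]
    _ = ∫⁻ u, (∑' c : L, ρ (u - c)) * (ENNReal.ofReal (gaussF n σ u / M u) * h u) := by
        rw [← lintegral_tsum fun c => by fun_prop]
        simp_rw [ENNReal.tsum_mul_right]
    _ ≤ ∫⁻ u, ρ u * h u := lintegral_mono fun u => by
        rw [← mul_assoc]
        exact mul_le_mul_left (hmass u) _
    _ = ∫⁻ x, h x ∂gaussMeasure n σ := (lintegral_gaussMeasure h).symm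

end Cosets

lemma meas_toReal_ge_le_of_lintegral_le {Ω : Type*} [MeasurableSpace Ω] {μ : Measure Ω}
    {f : Ω → ℝ≥0∞} (hf : AEMeasurable f μ) {ε γ : ℝ} (hε : 0 < ε) (hγ : 0 < γ)
    (hint : ∫⁻ x, f x ∂μ ≤ ENNReal.ofReal ε) :
    μ {x | γ * ε ≤ (f x).toReal} ≤ ENNReal.ofReal (1 / γ) := by
  have hγε : 0 < γ * ε := mul_pos hγ hε
  calc μ {x | γ * ε ≤ (f x).toReal}
      ≤ μ {x | ENNReal.ofReal (γ * ε) ≤ f x} := measure_mono fun x hx =>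
        (ENNReal.ofReal_le_ofReal hx).trans ENNReal.ofReal_toReal_le
    _ ≤ (∫⁻ x, f x ∂μ) / ENNReal.ofReal (γ * ε) :=
        meas_ge_le_lintegral_div hf (by simpa using hγε) ENNReal.ofReal_ne_top
    _ ≤ ENNReal.ofReal ε / ENNReal.ofReal (γ * ε) := by gcongr
    _ = ENNReal.ofReal (1 / γ) := by
        rw [← ENNReal.ofReal_div_of_pos hγε, mul_comm, ← div_div, div_self hε.ne']

theorem error_probability_bound_general (n : ℕ) (L : Submodule ℤ (EuclideanSpace ℝ (Fin n)))
    [DiscreteTopology L]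
    (σs σw ε : ℝ) (hσs : 0 < σs) (hσw : 0 < σw) (hε0 : 0 < ε)
    (α σeff : ℝ)
    (hα : α = σs ^ 2 / (σs ^ 2 + σw ^ 2))
    (hσeff : σeff = Real.sqrt (σs ^ 2 * σw ^ 2 / (σs ^ 2 + σw ^ 2)))
    (hnorm : σeff * errInv n ε (L : Set (EuclideanSpace ℝ (Fin n))) = 1)
    (γ : ℝ) (hγ : 1 ≤ γ) :
    gaussMeasure n σs {t : EuclideanSpace ℝ (Fin n) |
      γ * ε ≤ ∑' x : coset n (L : Set (EuclideanSpace ℝ (Fin n))) t,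
        (gaussF n σs x / gaussMass n σs (coset n (L : Set (EuclideanSpace ℝ (Fin n))) t)) *
          ∫ w in {w : EuclideanSpace ℝ (Fin n) |
              (1 - α) • (x : EuclideanSpace ℝ (Fin n)) + α • w ∉ voronoi n (L : Set (EuclideanSpace ℝ (Fin n)))},
            gaussF n σw w} ≤ ENNReal.ofReal (1 / γ) := by
  have : Countable L := TopologicalSpace.separableSpace_iff_countable.mp inferInstance
  have := isProbabilityMeasure_gaussMeasure (n := n) hσw
  set V := voronoi n (L : Set (EuclideanSpace ℝ (Fin n)))
  have hVc : MeasurableSet Vᶜ := (isClosed_voronoi _).measurableSet.compl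
  set P := fun x : EuclideanSpace ℝ (Fin n) => gaussMeasure n σw {w | (1 - α) • x + α • w ∉ V}
  have hP : Measurable P := measurable_gaussMeasure_preimage_affine (α := α) (A := Vᶜ) σw hVc
  set T := fun t => ∑' c : L,
    ENNReal.ofReal (gaussF n σs (t + c) / gaussMass n σs (coset n L t)) * P (t + c)
  have hmean : ∫⁻ t, T t ∂gaussMeasure n σs ≤ ENNReal.ofReal ε :=
    calc ∫⁻ t, T t ∂gaussMeasure n σs ≤ ∫⁻ x, P x ∂gaussMeasure n σs :=
          lintegral_tsum_coset_le L σs hP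
      _ = gaussMeasure n σeff Vᶜ := lintegral_gaussMeasure_preimage_affine hσs hσw hα hσeff hVc
      _ ≤ ENNReal.ofReal ε :=
          gaussMeasure_compl_voronoi_le (hσeff ▸ Real.sqrt_pos.2 (by positivity)) hnorm
  convert meas_toReal_ge_le_of_lintegral_le (f := T) (by fun_prop) hε0 (by linarith) hmean
    using 5 with t
  simp only [setIntegral_gaussF]
  exact tsum_coset_mul_toReal L σs t P fun _ => measure_ne_top _ _

/-- Error Probability Bound: under the normalization `σ_eff · err⁻¹_ε(Λ) = 1`,
for every `γ ≥ 1` the Gaussian measure of the set of dithers `t` whose decoding error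
probability `E(t)` is at least `γε` is at most `1/γ`. -/
theorem error_probability_bound (n : ℕ) (L : Submodule ℤ (EuclideanSpace ℝ (Fin n)))
    [DiscreteTopology L] [IsZLattice ℝ L]
    (σs σw ε : ℝ) (hσs : 0 < σs) (hσw : 0 < σw) (hε0 : 0 < ε) (hε1 : ε < 1)
    (α σeff : ℝ)
    (hα : α = σs ^ 2 / (σs ^ 2 + σw ^ 2))
    (hσeff : σeff = Real.sqrt (σs ^ 2 * σw ^ 2 / (σs ^ 2 + σw ^ 2)))
    (hnorm : σeff * errInv n ε (L : Set (EuclideanSpace ℝ (Fin n))) = 1)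
    (γ : ℝ) (hγ : 1 ≤ γ) :
    gaussMeasure n σs {t : EuclideanSpace ℝ (Fin n) |
      γ * ε ≤ ∑' x : coset n (L : Set (EuclideanSpace ℝ (Fin n))) t,
        (gaussF n σs x / gaussMass n σs (coset n (L : Set (EuclideanSpace ℝ (Fin n))) t)) *
          ∫ w in {w : EuclideanSpace ℝ (Fin n) |
              (1 - α) • (x : EuclideanSpace ℝ (Fin n)) + α • w ∉ voronoi n (L : Set (EuclideanSpace ℝ (Fin n)))},
            gaussF n σw w} ≤ ENNReal.ofReal (1 / γ) :=
  error_probability_bound_general n L σs σw ε hσs hσw hε0 α σeff hα hσeff hnorm γ hγ
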